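/- Every point (q,Q,p,P) ∈ ℂ⁴ satisfying the four equations 3Qp + 2qP + QP = 0, 9qQ² − 9Q³ + 2P² = 0, 9q²Q − 9Q³ − 3pP + P² = 0 and 6q³ − 6Q³ + 3p² + P² = 0 lies in the zero fibre of the undeformed DGR moment map, i.e. satisfies H(q,Q,p,P) = 0 and G(q,Q,p,P) = 0. -/
import Mathlib


/-- The undeformed DGR Hamiltonian H(q,Q,p,P). -/
noncomputable def H (q Q p P : ℂ) : ℂ :=
  (1/2 : ℂ) * (p ^ 2 - (1/3 : ℂ) * P ^ 2) + q ^ 3 - (3/2 : ℂ) * q * Q ^ 2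
    + (1/2 : ℂ) * Q ^ 3

/-- The undeformed DGR second integral G(q,Q,p,P). -/
noncomputable def G (q Q p P : ℂ) : ℂ :=
  (1/9 : ℂ) * (p - (1/2 : ℂ) * P) * P ^ 3
    - (3/2 : ℂ) * Q ^ 3 * p ^ 2
    - (3/2 : ℂ) * q * Q ^ 2 * p * P
    - (3/2 : ℂ) * Q ^ 3 * p * P
    + (-(q ^ 2 * Q) - q * Q ^ 2 + (1/2 : ℂ) * Q ^ 3) * P ^ 2
    - (3/2 : ℂ) * q ^ 3 * Q ^ 3 + (9/8 : ℂ) * q ^ 2 * Q ^ 4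
    + (9/4 : ℂ) * q * Q ^ 5 - (15/8 : ℂ) * Q ^ 6

/-- every solution of the four equations defining (the reduction of)
the component C₁ lies in the zero fibre of the undeformed DGR moment map. -/
theorem dgr_whitney_component_in_zero_fibre (q Q p P : ℂ)
    (h1 : 3 * Q * p + 2 * q * P + Q * P = 0)
    (h2 : 9 * q * Q ^ 2 - 9 * Q ^ 3 + 2 * P ^ 2 = 0)
    (h3 : 9 * q ^ 2 * Q - 9 * Q ^ 3 - 3 * p * P + P ^ 2 = 0)
    (h4 : 6 * q ^ 3 - 6 * Q ^ 3 + 3 * p ^ 2 + P ^ 2 = 0) :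
    H q Q p P = 0 ∧ G q Q p P = 0 := by
  constructor
  · unfold H
    linear_combination (1/6 : ℂ) * h4 - (1/6 : ℂ) * h2
  · unfold G
    linear_combination
      ((-1/6 : ℂ) * Q ^ 2 * P + (-1/2 : ℂ) * Q ^ 2 * p + (-1/3 : ℂ) * q * Q * P) * h1
      + ((-1/36 : ℂ) * P ^ 2 + (1/18 : ℂ) * p * P + (5/24 : ℂ) * Q ^ 3
          + (-1/24 : ℂ) * q * Q ^ 2 + (-1/6 : ℂ) * q ^ 2 * Q) * h2
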